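/- arXiv:2209.05476 — 2 statements merged into one kernel-verified Lean document; each statement's English description precedes it below -/
import Mathlib

section
/- Let X be a Riccati solution and x₀ ∈ ℝ^n. If (u*, x*) is an admissible pair with initial state x₀ that obeys the feedback law u*(t) = −(1/λ)·B̂(t)ᵀ X(t) M(t) x*(t) for all t ∈ [0,T], then J(u*, x*) = (1/2)·x₀ᵀ M(0)ᵀ X(0) M(0) x₀, and J(u*, x*) ≤ J(u, x) for every admissible pair (u, x) with initial state x₀; i.e., the Riccati feedback control solves the linear-quadratic regulator problem. -/
open Matrix Set MeasureTheory

noncomputable section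

/-- Entrywise continuity on a set for matrix-valued functions of one real variable. -/
def MatContOn {a b : ℕ} (f : ℝ → Matrix (Fin a) (Fin b) ℝ) (s : Set ℝ) : Prop :=
  ∀ i j, ContinuousOn (fun t => f t i j) s

/-- The quadratic cost functional `J(u, x)`, with Euclidean norms written via dot products. -/
def cost {n m r : ℕ} (lam T : ℝ) (C : ℝ → Matrix (Fin r) (Fin n) ℝ)
    (u : ℝ → Fin m → ℝ) (x : ℝ → Fin n → ℝ) : ℝ :=
  (1 / 2) * ∫ t in (0:ℝ)..T,
    ((C t).mulVec (x t) ⬝ᵥ (C t).mulVec (x t) + lam * (u t ⬝ᵥ u t))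

/-- An admissible control/state pair with initial state `x₀`: `u` continuous, `x`
differentiable on `[0, T]` with `M(t) x'(t) = A(t) x(t) + B(t) u(t)` and `x(0) = x₀`. -/
structure Admissible {n m : ℕ} (T : ℝ) (M A : ℝ → Matrix (Fin n) (Fin n) ℝ)
    (B : ℝ → Matrix (Fin n) (Fin m) ℝ) (x₀ : Fin n → ℝ)
    (u : ℝ → Fin m → ℝ) (x : ℝ → Fin n → ℝ) : Prop where
  u_cont : ∀ i, ContinuousOn (fun t => u t i) (Icc 0 T)
  dyn : ∃ x' : ℝ → Fin n → ℝ,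
    (∀ t ∈ Icc (0:ℝ) T, ∀ i, HasDerivWithinAt (fun s => x s i) (x' t i) (Icc (0:ℝ) T) t) ∧
    (∀ t ∈ Icc (0:ℝ) T, (M t).mulVec (x' t) = (A t).mulVec (x t) + (B t).mulVec (u t))
  init : x 0 = x₀

/-- A solution of the generalized differential Riccati equation: continuous, symmetric,
`t ↦ M(t)ᵀ X(t) M(t)` differentiable on `[0, T]`, terminal value `X(T) = 0`, and the
generalized DRE holds on `[0, T]`. -/
structure RiccatiSol {n m r : ℕ} (T lam : ℝ) (M A : ℝ → Matrix (Fin n) (Fin n) ℝ)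
    (B : ℝ → Matrix (Fin n) (Fin m) ℝ) (C : ℝ → Matrix (Fin r) (Fin n) ℝ)
    (X : ℝ → Matrix (Fin n) (Fin n) ℝ) : Prop where
  cont : MatContOn X (Icc 0 T)
  symm : ∀ t ∈ Icc (0:ℝ) T, (X t)ᵀ = X t
  terminal : X T = 0
  riccati : ∃ Y : ℝ → Matrix (Fin n) (Fin n) ℝ,
    (∀ t ∈ Icc (0:ℝ) T, ∀ i j,
      HasDerivWithinAt (fun s => ((M s)ᵀ * X s * M s) i j) (Y t i j) (Icc (0:ℝ) T) t) ∧
    (∀ t ∈ Icc (0:ℝ) T,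
      -(Y t) = (C t)ᵀ * C t + (A t)ᵀ * X t * M t + (M t)ᵀ * X t * A t
        - (1 / lam) • ((M t)ᵀ * X t * B t * (B t)ᵀ * X t * M t))

/-!
Along an admissible pair, the Riccati equation and the dynamics let one complete the square in
the derivative of the value function `V(t) = x(t)ᵀ M(t)ᵀ X(t) M(t) x(t)`:
`V' = λ‖u + λ⁻¹ BᵀXMx‖² - (‖Cx‖² + λ‖u‖²)`.
Integrating over `[0, T]` with `X(T) = 0` gives
`J(u, x) = ½ V(0) + (λ/2) ∫ ‖u + λ⁻¹ BᵀXMx‖²`, where `V(0)` depends only on `x₀`.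
The integral vanishes for the feedback pair and is nonnegative for every other pair.
-/

namespace Matrix

variable {ι κ ρ : Type*} [Fintype ι] [Fintype κ] [Fintype ρ]

theorem dotProduct_transpose_mul_mulVec {R : Type*} [CommSemiring R] (P : Matrix ρ ι R)
    (Q : Matrix ρ κ R) (v : ι → R) (w : κ → R) :
    v ⬝ᵥ (Pᵀ * Q) *ᵥ w = P *ᵥ v ⬝ᵥ Q *ᵥ w := by
  rw [← mulVec_mulVec, dotProduct_transpose_mulVec, dotProduct_comm]

theorem dotProduct_transpose_mul_mul_mulVec {R : Type*} [CommSemiring R] (P : Matrix ρ ι R)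
    (X : Matrix ρ ρ R) (Q : Matrix ρ κ R) (v : ι → R) (w : κ → R) :
    v ⬝ᵥ (Pᵀ * X * Q) *ᵥ w = P *ᵥ v ⬝ᵥ X *ᵥ Q *ᵥ w := by
  rw [Matrix.mul_assoc, dotProduct_transpose_mul_mulVec, mulVec_mulVec]

end Matrix

section

variable {ι κ ρ : Type*} [Fintype ι] [Fintype κ] [Fintype ρ]

theorem riccati_completing_square {lam : ℝ} (hlam : lam ≠ 0) {M A X Y : Matrix ι ι ℝ}
    {B : Matrix ι κ ℝ} {C : Matrix ρ ι ℝ} (hX : Xᵀ = X)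
    (hY : -Y = Cᵀ * C + Aᵀ * X * M + Mᵀ * X * A - (1 / lam) • (Mᵀ * X * B * Bᵀ * X * M))
    {p q : ι → ℝ} {u : κ → ℝ} (hq : M *ᵥ q = A *ᵥ p + B *ᵥ u) :
    q ⬝ᵥ (Mᵀ * X * M) *ᵥ p + p ⬝ᵥ Y *ᵥ p + p ⬝ᵥ (Mᵀ * X * M) *ᵥ q
      = lam * ((u + (1 / lam) • (Bᵀ * X * M) *ᵥ p) ⬝ᵥ (u + (1 / lam) • (Bᵀ * X * M) *ᵥ p))
        - (C *ᵥ p ⬝ᵥ C *ᵥ p + lam * (u ⬝ᵥ u)) := by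
  have symm : ∀ a b, a ⬝ᵥ X *ᵥ b = b ⬝ᵥ X *ᵥ a := fun a b => by
    rw [← dotProduct_transpose_mulVec, hX]
  set z := (Bᵀ * X * M) *ᵥ p with hz
  have gain : p ⬝ᵥ (Mᵀ * X * B * Bᵀ * X * M) *ᵥ p = z ⬝ᵥ z := by
    rw [← dotProduct_transpose_mul_mulVec]
    simp only [transpose_mul, transpose_transpose, hX, Matrix.mul_assoc]
  have square : (u + (1 / lam) • z) ⬝ᵥ (u + (1 / lam) • z)
      = u ⬝ᵥ u + 2 / lam * (u ⬝ᵥ z) + (1 / lam) ^ 2 * (z ⬝ᵥ z) := by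
    simp only [add_dotProduct, dotProduct_add, smul_dotProduct, dotProduct_smul, smul_eq_mul,
      dotProduct_comm z u]
    ring
  have cross : u ⬝ᵥ z = M *ᵥ p ⬝ᵥ X *ᵥ B *ᵥ u := by
    rw [hz, dotProduct_transpose_mul_mul_mulVec, symm]
  rw [← neg_neg Y, hY, square, cross]
  simp only [neg_mulVec, add_mulVec, sub_mulVec, smul_mulVec, dotProduct_neg, dotProduct_add,
    dotProduct_sub, dotProduct_smul, smul_eq_mul, dotProduct_transpose_mul_mul_mulVec,
    dotProduct_transpose_mul_mulVec, gain]
  rw [symm (M *ᵥ q), hq, symm (A *ᵥ p), mulVec_add, dotProduct_add]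
  field_simp
  ring

theorem hasDerivWithinAt_dotProduct_mulVec {s : Set ℝ} {t : ℝ}
    {x : ℝ → ι → ℝ} {x' : ι → ℝ} {N : ℝ → Matrix ι ι ℝ} {N' : Matrix ι ι ℝ}
    (hx : ∀ i, HasDerivWithinAt (fun s => x s i) (x' i) s t)
    (hN : ∀ i j, HasDerivWithinAt (fun s => N s i j) (N' i j) s t) :
    HasDerivWithinAt (fun s => x s ⬝ᵥ N s *ᵥ x s)
      (x' ⬝ᵥ N t *ᵥ x t + x t ⬝ᵥ N' *ᵥ x t + x t ⬝ᵥ N t *ᵥ x') s t := by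
  have hexpand : (fun s => x s ⬝ᵥ N s *ᵥ x s) = fun s => ∑ i, ∑ j, x s i * (N s i j * x s j) := by
    ext s
    simp only [dotProduct, mulVec, Finset.mul_sum]
  rw [hexpand]
  refine (HasDerivWithinAt.fun_sum fun i _ => HasDerivWithinAt.fun_sum fun j _ =>
    (hx i).mul ((hN i j).mul (hx j))).congr_deriv ?_
  simp only [dotProduct, mulVec, Finset.mul_sum, Pi.mul_apply, ← Finset.sum_add_distrib]
  exact Finset.sum_congr rfl fun i _ => Finset.sum_congr rfl fun j _ => by ring

end

theorem MatContOn.continuousOn {a b : ℕ} {f : ℝ → Matrix (Fin a) (Fin b) ℝ} {s : Set ℝ}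
    (hf : MatContOn f s) : ContinuousOn f s :=
  continuousOn_pi.2 fun i => continuousOn_pi.2 (hf i)

def feedbackResidual {n m : ℕ} (lam : ℝ) (B : ℝ → Matrix (Fin n) (Fin m) ℝ)
    (X M : ℝ → Matrix (Fin n) (Fin n) ℝ) (u : ℝ → Fin m → ℝ) (x : ℝ → Fin n → ℝ) (t : ℝ) :
    Fin m → ℝ :=
  u t + (1 / lam) • ((B t)ᵀ * X t * M t) *ᵥ x t

namespace Admissible

variable {n m r : ℕ} {T lam : ℝ} {M A X : ℝ → Matrix (Fin n) (Fin n) ℝ}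
  {B : ℝ → Matrix (Fin n) (Fin m) ℝ} {C : ℝ → Matrix (Fin r) (Fin n) ℝ} {x₀ : Fin n → ℝ}
  {u : ℝ → Fin m → ℝ} {x : ℝ → Fin n → ℝ}

theorem continuousOn_control (h : Admissible T M A B x₀ u x) : ContinuousOn u (Icc 0 T) :=
  continuousOn_pi.2 h.u_cont

theorem continuousOn_state (h : Admissible T M A B x₀ u x) : ContinuousOn x (Icc 0 T) := by
  obtain ⟨x', hx', -⟩ := h.dyn
  exact continuousOn_pi.2 fun i t ht => (hx' t ht i).continuousWithinAt

theorem hasDerivWithinAt_value (hlam : lam ≠ 0) (hX : RiccatiSol T lam M A B C X)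
    (h : Admissible T M A B x₀ u x) {t : ℝ} (ht : t ∈ Icc 0 T) :
    HasDerivWithinAt (fun s => x s ⬝ᵥ ((M s)ᵀ * X s * M s) *ᵥ x s)
      (lam * (feedbackResidual lam B X M u x t ⬝ᵥ feedbackResidual lam B X M u x t)
        - ((C t) *ᵥ x t ⬝ᵥ (C t) *ᵥ x t + lam * (u t ⬝ᵥ u t))) (Icc 0 T) t := by
  obtain ⟨x', hx', hdyn⟩ := h.dyn
  obtain ⟨Y, hY, hric⟩ := hX.riccati
  convert hasDerivWithinAt_dotProduct_mulVec (hx' t ht) (hY t ht) using 1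
  exact (riccati_completing_square hlam (hX.symm t ht) (hric t ht) (hdyn t ht)).symm

theorem cost_eq (hT : 0 ≤ T) (hlam : lam ≠ 0) (hM : MatContOn M (Icc 0 T))
    (hB : MatContOn B (Icc 0 T)) (hC : MatContOn C (Icc 0 T)) (hX : RiccatiSol T lam M A B C X)
    (h : Admissible T M A B x₀ u x) :
    cost lam T C u x = 1 / 2 * (x₀ ⬝ᵥ ((M 0)ᵀ * X 0 * M 0) *ᵥ x₀)
      + lam / 2 * ∫ t in (0 : ℝ)..T,
          feedbackResidual lam B X M u x t ⬝ᵥ feedbackResidual lam B X M u x t := by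
  have huc := h.continuousOn_control
  have hxc := h.continuousOn_state
  have hMc := hM.continuousOn
  have hBc := hB.continuousOn
  have hCc := hC.continuousOn
  have hXc := hX.cont.continuousOn
  have hw : IntervalIntegrable
      (fun t => feedbackResidual lam B X M u x t ⬝ᵥ feedbackResidual lam B X M u x t) volume 0 T :=
    ContinuousOn.intervalIntegrable_of_Icc hT (by unfold feedbackResidual; fun_prop)
  have hF : IntervalIntegrable
      (fun t => (C t) *ᵥ x t ⬝ᵥ (C t) *ᵥ x t + lam * (u t ⬝ᵥ u t)) volume 0 T :=
    ContinuousOn.intervalIntegrable_of_Icc hT (by fun_prop)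
  have ftc := intervalIntegral.integral_eq_sub_of_hasDerivAt_of_le hT
    (fun t ht => (h.hasDerivWithinAt_value hlam hX ht).continuousWithinAt)
    (fun t ht => (h.hasDerivWithinAt_value hlam hX (Ioo_subset_Icc_self ht)).hasDerivAt
      (Icc_mem_nhds ht.1 ht.2))
    ((hw.const_mul lam).sub hF)
  rw [intervalIntegral.integral_sub (hw.const_mul lam) hF, intervalIntegral.integral_const_mul,
    hX.terminal, h.init] at ftc
  simp only [Matrix.mul_zero, Matrix.zero_mul, zero_mulVec, dotProduct_zero] at ftc
  unfold cost
  linarith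

end Admissible

theorem riccati_feedback_solves_LQR_general {n m r : ℕ} (T lam : ℝ) (hT : 0 < T) (hlam : 0 < lam)
    (M A : ℝ → Matrix (Fin n) (Fin n) ℝ) (B : ℝ → Matrix (Fin n) (Fin m) ℝ)
    (C : ℝ → Matrix (Fin r) (Fin n) ℝ)
    (hM : MatContOn M (Icc 0 T))
    (hB : MatContOn B (Icc 0 T)) (hC : MatContOn C (Icc 0 T))
    (X : ℝ → Matrix (Fin n) (Fin n) ℝ) (hX : RiccatiSol T lam M A B C X)
    (x₀ : Fin n → ℝ) (ustar : ℝ → Fin m → ℝ) (xstar : ℝ → Fin n → ℝ)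
    (hadm : Admissible T M A B x₀ ustar xstar)
    (hfb : ∀ t ∈ Icc (0:ℝ) T,
      ustar t = -((1 / lam) • ((B t)ᵀ * X t * M t).mulVec (xstar t))) :
    cost lam T C ustar xstar = (1 / 2) * (x₀ ⬝ᵥ ((M 0)ᵀ * X 0 * M 0).mulVec x₀)
      ∧ ∀ (u : ℝ → Fin m → ℝ) (x : ℝ → Fin n → ℝ), Admissible T M A B x₀ u x →
          cost lam T C ustar xstar ≤ cost lam T C u x := by
  have hresidual : ∀ t ∈ uIcc 0 T, feedbackResidual lam B X M ustar xstar t = 0 := by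
    intro t ht
    rw [uIcc_of_le hT.le] at ht
    rw [feedbackResidual, hfb t ht, neg_add_cancel]
  have hstar : cost lam T C ustar xstar = 1 / 2 * (x₀ ⬝ᵥ ((M 0)ᵀ * X 0 * M 0) *ᵥ x₀) := by
    rw [hadm.cost_eq hT.le hlam.ne' hM hB hC hX,
      intervalIntegral.integral_congr (g := 0) fun t ht => by simp [hresidual t ht]]
    simp
  refine ⟨hstar, fun u x h => ?_⟩
  rw [hstar, h.cost_eq hT.le hlam.ne' hM hB hC hX, le_add_iff_nonneg_right]
  refine mul_nonneg (by positivity) (intervalIntegral.integral_nonneg hT.le fun t _ => ?_)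
  simpa using dotProduct_star_self_nonneg (feedbackResidual lam B X M u x t)

/-- If `(u*, x*)` is an admissible pair obeying the Riccati feedback law, then its cost
equals `(1/2) x₀ᵀ M(0)ᵀ X(0) M(0) x₀`, and it is optimal among all admissible pairs with
the same initial state. -/
theorem riccati_feedback_solves_LQR {n m r : ℕ} (T lam : ℝ) (hT : 0 < T) (hlam : 0 < lam)
    (M A : ℝ → Matrix (Fin n) (Fin n) ℝ) (B : ℝ → Matrix (Fin n) (Fin m) ℝ)
    (C : ℝ → Matrix (Fin r) (Fin n) ℝ)
    (hM : MatContOn M (Icc 0 T)) (hA : MatContOn A (Icc 0 T))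
    (hB : MatContOn B (Icc 0 T)) (hC : MatContOn C (Icc 0 T))
    (X : ℝ → Matrix (Fin n) (Fin n) ℝ) (hX : RiccatiSol T lam M A B C X)
    (x₀ : Fin n → ℝ) (ustar : ℝ → Fin m → ℝ) (xstar : ℝ → Fin n → ℝ)
    (hadm : Admissible T M A B x₀ ustar xstar)
    (hfb : ∀ t ∈ Icc (0:ℝ) T,
      ustar t = -((1 / lam) • ((B t)ᵀ * X t * M t).mulVec (xstar t))) :
    cost lam T C ustar xstar = (1 / 2) * (x₀ ⬝ᵥ ((M 0)ᵀ * X 0 * M 0).mulVec x₀)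
      ∧ ∀ (u : ℝ → Fin m → ℝ) (x : ℝ → Fin n → ℝ), Admissible T M A B x₀ u x →
          cost lam T C ustar xstar ≤ cost lam T C u x :=
  riccati_feedback_solves_LQR_general T lam hT hlam M A B C hM hB hC X hX x₀ ustar xstar hadm hfb
end
end

section
/- Let X be a Riccati solution and x₀ ∈ ℝ^n. If (u, x) is an admissible pair with initial state x₀ whose cost attains the optimal value, J(u,x) = (1/2)·x₀ᵀ M(0)ᵀ X(0) M(0) x₀, then u satisfies the feedback law u(t) = −(1/λ)·B̂(t)ᵀ X(t) M(t) x(t) for every t ∈ [0,T]; i.e., the minimizing control of the linear-quadratic regulator problem is uniquely given by the Riccati feedback. -/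
open Matrix Set MeasureTheory

noncomputable section

/-! Completion of squares: along an admissible trajectory, the Riccati equation makes
`V(t) = x(t)ᵀ M(t)ᵀ X(t) M(t) x(t)` satisfy `V' = λ‖u - u_fb‖² - (‖Cx‖² + λ‖u‖²)`, where
`u_fb = -(1/λ) BᵀXMx` is the feedback control. Integrating over `[0, T]` with `X(T) = 0` gives
`J(u, x) = ½ V(0) + ½ ∫ λ‖u - u_fb‖²`, so attaining the value `½ V(0)` forces the continuous,
nonnegative integrand to vanish on `[0, T]`. -/

section MatrixAlgebra

variable {R : Type*} {ι ι' κ ρ : Type*} [Fintype ι] [Fintype ι'] [Fintype κ] [Fintype ρ]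

theorem Matrix.dotProduct_transpose_mul_mulVec_s2 [CommSemiring R] (N : Matrix ι' ι R)
    (N' : Matrix ι' κ R) (a : ι → R) (b : κ → R) : a ⬝ᵥ (Nᵀ * N') *ᵥ b = N *ᵥ a ⬝ᵥ N' *ᵥ b := by
  rw [← mulVec_mulVec, dotProduct_mulVec, vecMul_transpose]

theorem Matrix.dotProduct_transpose_mul_mul_mulVec_s2 [CommSemiring R] (N : Matrix ι' ι R)
    (Q : Matrix ι' ι' R) (N' : Matrix ι' κ R) (a : ι → R) (b : κ → R) :
    a ⬝ᵥ (Nᵀ * Q * N') *ᵥ b = N *ᵥ a ⬝ᵥ Q *ᵥ (N' *ᵥ b) := by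
  rw [Matrix.mul_assoc, dotProduct_transpose_mul_mulVec_s2, mulVec_mulVec]

theorem Matrix.dotProduct_mulVec_comm_of_transpose_eq [CommSemiring R] {Q : Matrix ι ι R}
    (hQ : Qᵀ = Q) (a b : ι → R) : a ⬝ᵥ Q *ᵥ b = b ⬝ᵥ Q *ᵥ a := by
  rw [dotProduct_mulVec, ← mulVec_transpose, hQ, dotProduct_comm]

theorem Matrix.add_smul_dotProduct_self [CommRing R] (u v : ι → R) (c : R) :
    (u + c • v) ⬝ᵥ (u + c • v) = u ⬝ᵥ u + 2 * c * (u ⬝ᵥ v) + c ^ 2 * (v ⬝ᵥ v) := by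
  simp only [dotProduct_add, add_dotProduct, smul_dotProduct, dotProduct_smul, smul_eq_mul,
    dotProduct_comm v u]
  ring

theorem riccati_completion_of_squares [Field R] {lam : R} (hlam : lam ≠ 0)
    {M A : Matrix ι' ι R} {X : Matrix ι' ι' R} {Y : Matrix ι ι R} {B : Matrix ι' κ R}
    {C : Matrix ρ ι R} {x x' : ι → R} {u : κ → R} (hX : Xᵀ = X)
    (hdyn : M *ᵥ x' = A *ᵥ x + B *ᵥ u)
    (hY : -Y = Cᵀ * C + Aᵀ * X * M + Mᵀ * X * A - (1 / lam) • (Mᵀ * X * B * Bᵀ * X * M)) :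
    x' ⬝ᵥ (Mᵀ * X * M) *ᵥ x + x ⬝ᵥ (Y *ᵥ x + (Mᵀ * X * M) *ᵥ x') =
      lam * ((u + (1 / lam) • (Bᵀ * X * M) *ᵥ x) ⬝ᵥ (u + (1 / lam) • (Bᵀ * X * M) *ᵥ x)) -
        (C *ᵥ x ⬝ᵥ C *ᵥ x + lam * (u ⬝ᵥ u)) := by
  have hcross : x' ⬝ᵥ (Mᵀ * X * M) *ᵥ x =
      A *ᵥ x ⬝ᵥ X *ᵥ (M *ᵥ x) + u ⬝ᵥ (Bᵀ * X * M) *ᵥ x := by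
    rw [dotProduct_transpose_mul_mul_mulVec_s2, hdyn, add_dotProduct,
      dotProduct_transpose_mul_mul_mulVec_s2 B]
  have hgain : x ⬝ᵥ (Mᵀ * X * B * Bᵀ * X * M) *ᵥ x =
      (Bᵀ * X * M) *ᵥ x ⬝ᵥ (Bᵀ * X * M) *ᵥ x := by
    have hfactor : Mᵀ * X * B * Bᵀ * X * M = (Bᵀ * X * M)ᵀ * (Bᵀ * X * M) := by
      simp only [transpose_mul, transpose_transpose, hX, Matrix.mul_assoc]
    rw [hfactor, dotProduct_transpose_mul_mulVec_s2]
  have hYx : x ⬝ᵥ Y *ᵥ x = -(C *ᵥ x ⬝ᵥ C *ᵥ x) - 2 * (A *ᵥ x ⬝ᵥ X *ᵥ (M *ᵥ x)) +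
      1 / lam * ((Bᵀ * X * M) *ᵥ x ⬝ᵥ (Bᵀ * X * M) *ᵥ x) := by
    rw [← neg_neg Y, hY]
    simp only [neg_mulVec, sub_mulVec, add_mulVec, smul_mulVec, dotProduct_neg, dotProduct_sub,
      dotProduct_add, dotProduct_smul, smul_eq_mul, hgain, dotProduct_transpose_mul_mulVec_s2,
      dotProduct_transpose_mul_mul_mulVec_s2 M X A, dotProduct_transpose_mul_mul_mulVec_s2 A X M,
      dotProduct_mulVec_comm_of_transpose_eq hX (M *ᵥ x)]
    ring
  have hP : (Mᵀ * X * M)ᵀ = Mᵀ * X * M := by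
    simp only [transpose_mul, transpose_transpose, hX, Matrix.mul_assoc]
  rw [dotProduct_add, hYx, dotProduct_mulVec_comm_of_transpose_eq hP x, hcross,
    add_smul_dotProduct_self]
  field_simp
  ring

end MatrixAlgebra

section Calculus

variable {ι κ : Type*} [Fintype ι] {s : Set ℝ} {t : ℝ}

theorem HasDerivWithinAt.dotProduct {a b : ℝ → ι → ℝ} {a' b' : ι → ℝ}
    (ha : HasDerivWithinAt a a' s t) (hb : HasDerivWithinAt b b' s t) :
    HasDerivWithinAt (fun τ => a τ ⬝ᵥ b τ) (a' ⬝ᵥ b t + a t ⬝ᵥ b') s t := by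
  rw [hasDerivWithinAt_pi] at ha hb
  exact (HasDerivWithinAt.fun_sum fun i _ => (ha i).fun_mul (hb i)).congr_deriv
    Finset.sum_add_distrib

theorem HasDerivWithinAt.matrix_mulVec {P : ℝ → Matrix κ ι ℝ} {P' : Matrix κ ι ℝ}
    {x : ℝ → ι → ℝ} {x' : ι → ℝ} (hP : ∀ i j, HasDerivWithinAt (fun τ => P τ i j) (P' i j) s t)
    (hx : HasDerivWithinAt x x' s t) :
    HasDerivWithinAt (fun τ => P τ *ᵥ x τ) (P' *ᵥ x t + P t *ᵥ x') s t :=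
  hasDerivWithinAt_pi.2 fun i => (hasDerivWithinAt_pi.2 (hP i)).dotProduct hx

theorem intervalIntegral.integral_eq_sub_of_hasDerivWithinAt_Icc {f f' : ℝ → ℝ} {a b : ℝ}
    (hab : a ≤ b) (hf : ∀ τ ∈ Icc a b, HasDerivWithinAt f (f' τ) (Icc a b) τ)
    (hf' : IntervalIntegrable f' volume a b) : ∫ τ in a..b, f' τ = f b - f a :=
  integral_eq_sub_of_hasDeriv_right_of_le hab (fun τ hτ => (hf τ hτ).continuousWithinAt)
    (fun τ hτ => ((hf τ (Ioo_subset_Icc_self hτ)).hasDerivAt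
      (Icc_mem_nhds hτ.1 hτ.2)).hasDerivWithinAt) hf'

theorem ContinuousOn.eqOn_zero_of_nonneg_of_integral_eq_zero {f : ℝ → ℝ} {a b : ℝ} (hab : a < b)
    (hf : ContinuousOn f (Icc a b)) (hf₀ : ∀ τ ∈ Icc a b, 0 ≤ f τ)
    (hint : ∫ τ in a..b, f τ = 0) : EqOn f 0 (Icc a b) := by
  have hae : f =ᵐ[volume.restrict (Ioc a b)] 0 := by
    refine (intervalIntegral.integral_eq_zero_iff_of_le_of_nonneg_ae hab.le ?_
      (hf.intervalIntegrable_of_Icc hab.le)).1 hint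
    exact ae_restrict_of_forall_mem measurableSet_Ioc fun τ hτ => hf₀ τ (Ioc_subset_Icc_self hτ)
  have hIoc : EqOn f 0 (Ioc a b) := by
    refine Measure.eqOn_of_ae_eq hae (hf.mono Ioc_subset_Icc_self) continuousOn_const ?_
    rw [interior_Ioc, closure_Ioo hab.ne]
    exact Ioc_subset_Icc_self
  refine hIoc.of_subset_closure hf continuousOn_const Ioc_subset_Icc_self ?_
  rw [closure_Ioc hab.ne]

end Calculus

def riccatiFeedback {ι κ : Type*} [Fintype ι] (lam : ℝ) (M : ℝ → Matrix ι ι ℝ)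
    (B : ℝ → Matrix ι κ ℝ) (X : ℝ → Matrix ι ι ℝ) (x : ℝ → ι → ℝ) (t : ℝ) : κ → ℝ :=
  -((1 / lam) • ((B t)ᵀ * X t * M t) *ᵥ x t)

theorem ContinuousOn.riccatiFeedback {ι κ : Type*} [Fintype ι] {lam : ℝ}
    {M X : ℝ → Matrix ι ι ℝ} {B : ℝ → Matrix ι κ ℝ} {x : ℝ → ι → ℝ} {s : Set ℝ}
    (hM : ContinuousOn M s) (hB : ContinuousOn B s) (hX : ContinuousOn X s)
    (hx : ContinuousOn x s) : ContinuousOn (riccatiFeedback lam M B X x) s := by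
  unfold _root_.riccatiFeedback
  fun_prop

section Trajectory

variable {n m r : ℕ} {T lam : ℝ} {M A X : ℝ → Matrix (Fin n) (Fin n) ℝ}
  {B : ℝ → Matrix (Fin n) (Fin m) ℝ} {C : ℝ → Matrix (Fin r) (Fin n) ℝ} {x₀ : Fin n → ℝ}
  {u : ℝ → Fin m → ℝ} {x : ℝ → Fin n → ℝ}

theorem Admissible.continuousOn_state_s2 (hadm : Admissible T M A B x₀ u x) :
    ContinuousOn x (Icc 0 T) := by
  obtain ⟨x', hx', -⟩ := hadm.dyn
  exact fun t ht => (hasDerivWithinAt_pi.2 (hx' t ht)).continuousWithinAt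

theorem Admissible.continuousOn_control_s2 (hadm : Admissible T M A B x₀ u x) :
    ContinuousOn u (Icc 0 T) :=
  continuousOn_pi.2 hadm.u_cont

theorem Admissible.continuousOn_riccatiFeedback (hM : MatContOn M (Icc 0 T))
    (hB : MatContOn B (Icc 0 T)) (hX : RiccatiSol T lam M A B C X)
    (hadm : Admissible T M A B x₀ u x) :
    ContinuousOn (riccatiFeedback lam M B X x) (Icc 0 T) :=
  hM.continuousOn.riccatiFeedback hB.continuousOn hX.cont.continuousOn hadm.continuousOn_state_s2

theorem Admissible.hasDerivWithinAt_riccatiValue (hlam : lam ≠ 0)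
    (hX : RiccatiSol T lam M A B C X) (hadm : Admissible T M A B x₀ u x) :
    ∀ t ∈ Icc (0:ℝ) T, HasDerivWithinAt (fun τ => x τ ⬝ᵥ ((M τ)ᵀ * X τ * M τ) *ᵥ x τ)
      (lam * ((u t - riccatiFeedback lam M B X x t) ⬝ᵥ (u t - riccatiFeedback lam M B X x t)) -
        (C t *ᵥ x t ⬝ᵥ C t *ᵥ x t + lam * (u t ⬝ᵥ u t))) (Icc 0 T) t := by
  obtain ⟨x', hx', hdyn⟩ := hadm.dyn
  obtain ⟨Y, hY, hric⟩ := hX.riccati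
  intro t ht
  have hx : HasDerivWithinAt x (x' t) (Icc 0 T) t := hasDerivWithinAt_pi.2 (hx' t ht)
  have hV := hx.dotProduct (HasDerivWithinAt.matrix_mulVec (hY t ht) hx)
  rw [riccati_completion_of_squares hlam (hX.symm t ht) (hdyn t ht) (hric t ht)] at hV
  simpa only [riccatiFeedback, sub_neg_eq_add] using hV

theorem Admissible.cost_eq_s2 (hT : 0 ≤ T) (hlam : lam ≠ 0) (hM : MatContOn M (Icc 0 T))
    (hB : MatContOn B (Icc 0 T)) (hC : MatContOn C (Icc 0 T))
    (hX : RiccatiSol T lam M A B C X) (hadm : Admissible T M A B x₀ u x) :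
    cost lam T C u x = (1 / 2) * (x₀ ⬝ᵥ ((M 0)ᵀ * X 0 * M 0) *ᵥ x₀) +
      (1 / 2) * ∫ t in (0:ℝ)..T,
        lam * ((u t - riccatiFeedback lam M B X x t) ⬝ᵥ (u t - riccatiFeedback lam M B X x t)) := by
  have := hadm.continuousOn_state_s2
  have := hadm.continuousOn_control_s2
  have := hadm.continuousOn_riccatiFeedback hM hB hX
  have := hC.continuousOn
  have hV := intervalIntegral.integral_eq_sub_of_hasDerivWithinAt_Icc hT
    (hadm.hasDerivWithinAt_riccatiValue hlam hX)
    (ContinuousOn.intervalIntegrable_of_Icc hT (by fun_prop))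
  rw [intervalIntegral.integral_sub (ContinuousOn.intervalIntegrable_of_Icc hT (by fun_prop))
    (ContinuousOn.intervalIntegrable_of_Icc hT (by fun_prop))] at hV
  simp only [hX.terminal, hadm.init, Matrix.mul_zero, Matrix.zero_mul, Matrix.zero_mulVec,
    dotProduct_zero, zero_sub] at hV
  rw [cost]
  linarith

end Trajectory

theorem optimal_control_is_riccati_feedback_general {n m r : ℕ} (T lam : ℝ) (hT : 0 < T)
    (hlam : 0 < lam)
    (M A : ℝ → Matrix (Fin n) (Fin n) ℝ) (B : ℝ → Matrix (Fin n) (Fin m) ℝ)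
    (C : ℝ → Matrix (Fin r) (Fin n) ℝ)
    (hM : MatContOn M (Icc 0 T))
    (hB : MatContOn B (Icc 0 T)) (hC : MatContOn C (Icc 0 T))
    (X : ℝ → Matrix (Fin n) (Fin n) ℝ) (hX : RiccatiSol T lam M A B C X)
    (x₀ : Fin n → ℝ) (u : ℝ → Fin m → ℝ) (x : ℝ → Fin n → ℝ)
    (hadm : Admissible T M A B x₀ u x)
    (hopt : cost lam T C u x = (1 / 2) * (x₀ ⬝ᵥ ((M 0)ᵀ * X 0 * M 0).mulVec x₀)) :
    ∀ t ∈ Icc (0:ℝ) T, u t = -((1 / lam) • ((B t)ᵀ * X t * M t).mulVec (x t)) := by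
  intro t ht
  have hdefect_integral := (mul_eq_zero.1 (left_eq_add.1
    (hopt.symm.trans (hadm.cost_eq_s2 hT.le hlam.ne' hM hB hC hX)))).resolve_left (by norm_num)
  have := hadm.continuousOn_control_s2
  have := hadm.continuousOn_riccatiFeedback hM hB hX
  have hdefect_sq := ContinuousOn.eqOn_zero_of_nonneg_of_integral_eq_zero hT (by fun_prop)
    (fun τ _ => mul_nonneg hlam.le (dotProduct_self_star_nonneg _)) hdefect_integral ht
  have hdefect := dotProduct_self_eq_zero.1 ((mul_eq_zero.1 hdefect_sq).resolve_left hlam.ne')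
  exact sub_eq_zero.1 hdefect

/-- Uniqueness of the minimizer: if an admissible pair `(u, x)` attains the optimal value
`(1/2) x₀ᵀ M(0)ᵀ X(0) M(0) x₀`, then `u` is the Riccati feedback control. -/
theorem optimal_control_is_riccati_feedback {n m r : ℕ} (T lam : ℝ) (hT : 0 < T)
    (hlam : 0 < lam)
    (M A : ℝ → Matrix (Fin n) (Fin n) ℝ) (B : ℝ → Matrix (Fin n) (Fin m) ℝ)
    (C : ℝ → Matrix (Fin r) (Fin n) ℝ)
    (hM : MatContOn M (Icc 0 T)) (hA : MatContOn A (Icc 0 T))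
    (hB : MatContOn B (Icc 0 T)) (hC : MatContOn C (Icc 0 T))
    (X : ℝ → Matrix (Fin n) (Fin n) ℝ) (hX : RiccatiSol T lam M A B C X)
    (x₀ : Fin n → ℝ) (u : ℝ → Fin m → ℝ) (x : ℝ → Fin n → ℝ)
    (hadm : Admissible T M A B x₀ u x)
    (hopt : cost lam T C u x = (1 / 2) * (x₀ ⬝ᵥ ((M 0)ᵀ * X 0 * M 0).mulVec x₀)) :
    ∀ t ∈ Icc (0:ℝ) T, u t = -((1 / lam) • ((B t)ᵀ * X t * M t).mulVec (x t)) :=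
  optimal_control_is_riccati_feedback_general T lam hT hlam M A B C hM hB hC X hX x₀ u x hadm hopt
end
end
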